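/- Let Δ be an irreducible root system with highest root θ and dual Coxeter number h*. The number of roots γ ∈ Δ with (γ, θ∨) = 1 equals 2h* − 4. -/

import Mathlib

/-! Writing `θ∨ = ∑ cₐ α∨` over the simple coroots, `∑_{γ > 0} (γ, θ∨) = ∑ cₐ ∑_{γ > 0} (γ, α∨)
= 2 (h* − 1)`, because the simple reflection `s_α` permutes the positive roots other than `α` and
negates `(·, α∨)`. On the other hand, since `θ` is highest, every positive root pairs with `θ∨` to
`0`, `1` or `2`, the value `2` being attained only at `θ`, and no negative root pairs to `1`.
Hence `2 (h* − 1) = |Δ(1)| + 2`. -/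

variable {V : Type*} [NormedAddCommGroup V] [InnerProductSpace ℝ V]

/-- Data of a reduced crystallographic root system `Δ` in a Euclidean space, together with a
choice of positive system `Δ⁺` and the corresponding simple roots `Π`. -/
structure RootSystemData (V : Type*) [NormedAddCommGroup V] [InnerProductSpace ℝ V] where
  roots : Finset V
  pos : Finset V
  simples : Finset V
  zero_not_mem : (0 : V) ∉ roots
  neg_mem : ∀ γ ∈ roots, -γ ∈ roots
  reduced : ∀ γ ∈ roots, ∀ c : ℝ, c • γ ∈ roots → c = 1 ∨ c = -1
  crystallographic : ∀ γ ∈ roots, ∀ δ ∈ roots,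
    ∃ n : ℤ, 2 * (inner ℝ γ δ : ℝ) / (inner ℝ δ δ : ℝ) = (n : ℝ)
  reflect_mem : ∀ γ ∈ roots, ∀ δ ∈ roots,
    γ - (2 * (inner ℝ γ δ : ℝ) / (inner ℝ δ δ : ℝ)) • δ ∈ roots
  pos_subset : pos ⊆ roots
  pos_or_neg : ∀ γ ∈ roots, γ ∈ pos ∨ -γ ∈ pos
  pos_neg_disjoint : ∀ γ ∈ pos, -γ ∉ pos
  simples_subset : simples ⊆ pos
  simples_indep : LinearIndependent ℝ (fun α : {x // x ∈ simples} => (α : V))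
  pos_combo : ∀ γ ∈ pos, ∃ c : V → ℕ, γ = ∑ α ∈ simples, (c α : ℝ) • α

/-- Irreducibility: the roots admit no partition into two nonempty mutually orthogonal parts. -/
def RootSystemData.Irreducible (R : RootSystemData V) : Prop :=
  ∀ A B : Set V, A ∪ B = ↑R.roots → Disjoint A B →
    (∀ a ∈ A, ∀ b ∈ B, (inner ℝ a b : ℝ) = 0) → A = ∅ ∨ B = ∅

/-- The reflection in the hyperplane orthogonal to `δ`. -/
noncomputable def reflAt (δ : V) : Function.End V :=
  fun x => x - (2 * (inner ℝ x δ : ℝ) / (inner ℝ δ δ : ℝ)) • δ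

/-- The Weyl group, generated by the reflections in the roots (each reflection is an
involution, so the closure as a monoid of endomorphisms coincides with the generated group). -/
def weylGroup (R : RootSystemData V) : Submonoid (Function.End V) :=
  Submonoid.closure {f | ∃ δ ∈ R.roots, f = reflAt δ}

/-- The inversion set `N(w) = {γ ∈ Δ⁺ : w(γ) < 0}`. -/
def invSet (R : RootSystemData V) (w : Function.End V) : Set V :=
  {γ | γ ∈ R.pos ∧ -(w γ) ∈ R.pos}

/-- The pairing `(γ, θ∨) = 2(γ,θ)/(θ,θ)`. -/
noncomputable def copair (θ γ : V) : ℝ := 2 * (inner ℝ γ θ : ℝ) / (inner ℝ θ θ : ℝ)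

/-- `μ ≤ γ` iff `γ − μ` is a nonnegative integer combination of the simple roots lying in
the subset `Z`. -/
def rootLEon (simples : Finset V) (Z : Set V) (μ γ : V) : Prop :=
  ∃ c : V → ℕ, (∀ α, α ∉ Z → c α = 0) ∧ γ = μ + ∑ α ∈ simples, (c α : ℝ) • α

/-- `Δ(1) = {γ ∈ Δ : (γ, θ∨) = 1}`. -/
noncomputable def levelOne (R : RootSystemData V) (θ : V) : Set V :=
  {γ | γ ∈ R.roots ∧ copair θ γ = 1}

noncomputable def coroot (θ : V) : V := (2 / (inner ℝ θ θ : ℝ)) • θ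

theorem copair_eq_inner_coroot (θ γ : V) : copair θ γ = inner ℝ γ (coroot θ) := by
  rw [coroot, real_inner_smul_right, copair]
  ring

theorem copair_add (θ x y : V) : copair θ (x + y) = copair θ x + copair θ y := by
  simp only [copair_eq_inner_coroot, inner_add_left]

theorem copair_neg (θ x : V) : copair θ (-x) = -copair θ x := by
  simp only [copair_eq_inner_coroot, inner_neg_left]

theorem copair_sub (θ x y : V) : copair θ (x - y) = copair θ x - copair θ y := by
  simp only [copair_eq_inner_coroot, inner_sub_left]

theorem copair_smul (θ x : V) (t : ℝ) : copair θ (t • x) = t * copair θ x := by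
  simp only [copair_eq_inner_coroot, real_inner_smul_left]

theorem copair_self {θ : V} (hθ : θ ≠ 0) : copair θ θ = 2 := by
  rw [copair, mul_div_assoc, div_self (inner_self_ne_zero.mpr hθ), mul_one]

theorem copair_neg_iff {θ : V} (hθ : θ ≠ 0) (γ : V) :
    copair θ γ < 0 ↔ (inner ℝ γ θ : ℝ) < 0 := by
  rw [copair, div_lt_iff₀ (real_inner_self_pos.mpr hθ), zero_mul]
  constructor <;> intro h <;> linarith

theorem reflAt_apply (δ x : V) : reflAt δ x = x - copair δ x • δ := rfl

theorem copair_reflAt {δ : V} (hδ : δ ≠ 0) (x : V) : copair δ (reflAt δ x) = -copair δ x := by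
  rw [reflAt_apply, copair_sub, copair_smul, copair_self hδ]
  ring

theorem reflAt_reflAt {δ : V} (hδ : δ ≠ 0) (x : V) : reflAt δ (reflAt δ x) = x := by
  rw [reflAt_apply (x := reflAt δ x), copair_reflAt hδ, reflAt_apply]
  module

theorem reflAt_self {δ : V} (hδ : δ ≠ 0) : reflAt δ δ = -δ := by
  rw [reflAt_apply, copair_self hδ]
  module

theorem reflAt_eq_self_iff {δ : V} (hδ : δ ≠ 0) (x : V) : reflAt δ x = x ↔ copair δ x = 0 := by
  rw [reflAt_apply, sub_eq_self, smul_eq_zero, or_iff_left hδ]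

namespace RootSystemData

variable (R : RootSystemData V)

theorem ne_zero_of_mem_roots {γ : V} (hγ : γ ∈ R.roots) : γ ≠ 0 :=
  fun h => R.zero_not_mem (h ▸ hγ)

theorem reflAt_mem_roots {δ γ : V} (hδ : δ ∈ R.roots) (hγ : γ ∈ R.roots) :
    reflAt δ γ ∈ R.roots :=
  R.reflect_mem γ hγ δ hδ

theorem eq_of_sum_smul_eq {f g : V → ℝ}
    (h : ∑ α ∈ R.simples, f α • α = ∑ α ∈ R.simples, g α • α) {α : V} (hα : α ∈ R.simples) :
    f α = g α :=
  (linearIndepOn_finset_iffₛ (v := id)).mp R.simples_indep f g h α hα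

def posCone : AddSubmonoid V := AddSubmonoid.closure R.simples

theorem mem_posCone_iff {x : V} :
    x ∈ R.posCone ↔ ∃ c : V → ℕ, x = ∑ α ∈ R.simples, (c α : ℝ) • α := by
  simp only [Nat.cast_smul_eq_nsmul]
  constructor
  · intro hx
    obtain ⟨c, -, rfl⟩ := AddSubmonoid.mem_closure_finset.mp hx
    exact ⟨c, rfl⟩
  · rintro ⟨c, rfl⟩
    exact sum_mem fun α hα => nsmul_mem (AddSubmonoid.subset_closure hα) _

theorem mem_posCone_of_mem_pos {γ : V} (hγ : γ ∈ R.pos) : γ ∈ R.posCone :=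
  R.mem_posCone_iff.mpr (R.pos_combo γ hγ)

theorem eq_zero_of_mem_posCone_of_neg_mem {x : V} (hx : x ∈ R.posCone) (hnx : -x ∈ R.posCone) :
    x = 0 := by
  obtain ⟨a, rfl⟩ := R.mem_posCone_iff.mp hx
  obtain ⟨b, hb⟩ := R.mem_posCone_iff.mp hnx
  have hab : ∑ α ∈ R.simples, ((a α : ℝ) + b α) • α = ∑ α ∈ R.simples, (0 : ℝ) • α := by
    simp only [add_smul, Finset.sum_add_distrib, ← hb, zero_smul, Finset.sum_const_zero,
      add_neg_cancel]
  refine Finset.sum_eq_zero fun α hα => ?_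
  have hα0 : a α + b α = 0 := by exact_mod_cast R.eq_of_sum_smul_eq hab hα
  rw [show a α = 0 by omega, Nat.cast_zero, zero_smul]

theorem mem_pos_iff_mem_posCone {γ : V} (hγ : γ ∈ R.roots) : γ ∈ R.pos ↔ γ ∈ R.posCone := by
  refine ⟨R.mem_posCone_of_mem_pos, fun h => ?_⟩
  refine (R.pos_or_neg γ hγ).resolve_right fun hneg => R.ne_zero_of_mem_roots hγ ?_
  exact R.eq_zero_of_mem_posCone_of_neg_mem h (R.mem_posCone_of_mem_pos hneg)

variable {R}

theorem reflAt_mem_pos_of_mem_simples {α γ : V} (hα : α ∈ R.simples) (hγ : γ ∈ R.pos)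
    (hne : γ ≠ α) : reflAt α γ ∈ R.pos := by
  classical
  have hαr : α ∈ R.roots := R.pos_subset (R.simples_subset hα)
  have hγr : γ ∈ R.roots := R.pos_subset hγ
  by_contra hneg
  obtain ⟨g, hg⟩ := R.pos_combo γ hγ
  obtain ⟨d, hd⟩ :=
    R.pos_combo _ ((R.pos_or_neg _ (R.reflAt_mem_roots hαr hγr)).resolve_left hneg)
  have hsum : ∑ β ∈ R.simples, ((g β : ℝ) + d β) • β
      = ∑ β ∈ R.simples, (if β = α then copair α γ else 0) • β := by
    simp only [add_smul, Finset.sum_add_distrib, ← hg, ← hd, ite_smul, zero_smul,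
      Finset.sum_ite_eq', if_pos hα, reflAt_apply]
    abel
  have hgβ : ∀ β ∈ R.simples, β ≠ α → g β = 0 := fun β hβ hβα => by
    have h := R.eq_of_sum_smul_eq hsum hβ
    rw [if_neg hβα] at h
    exact_mod_cast (Nat.add_eq_zero_iff.mp (by exact_mod_cast h)).1
  have hγα : γ = (g α : ℝ) • α := by
    rw [hg, Finset.sum_eq_single_of_mem α hα fun β hβ hβα => by rw [hgβ β hβ hβα, Nat.cast_zero,
      zero_smul]]
  rcases R.reduced α hαr (g α) (hγα ▸ hγr) with h1 | h1
  · exact hne (by rw [hγα, h1, one_smul])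
  · linarith [(g α).cast_nonneg (α := ℝ)]

/-- `s_α` permutes `Δ⁺ ∖ {α}` and negates `(·, α∨)`, so only `α` itself contributes. -/
theorem sum_copair_pos_of_mem_simples {α : V} (hα : α ∈ R.simples) :
    ∑ γ ∈ R.pos, copair α γ = 2 := by
  classical
  have hαp : α ∈ R.pos := R.simples_subset hα
  have hα0 : α ≠ 0 := R.ne_zero_of_mem_roots (R.pos_subset hαp)
  rw [← Finset.add_sum_erase _ _ hαp, copair_self hα0, add_eq_left]
  refine Finset.sum_involution (fun γ _ => reflAt α γ) (fun γ _ => ?_) (fun γ _ h => ?_)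
    (fun γ hγ => ?_) (fun γ _ => reflAt_reflAt hα0 γ)
  · rw [copair_reflAt hα0, add_neg_cancel]
  · exact mt (reflAt_eq_self_iff hα0 γ).mp h
  · obtain ⟨hγα, hγp⟩ := Finset.mem_erase.mp hγ
    refine Finset.mem_erase.mpr ⟨fun h => R.pos_neg_disjoint α hαp ?_,
      reflAt_mem_pos_of_mem_simples hα hγp hγα⟩
    rwa [← reflAt_reflAt hα0 γ, h, reflAt_self hα0] at hγp

theorem sum_copair_pos_eq_of_coroot_eq {θ : V} {c : V → ℝ}
    (hc : coroot θ = ∑ α ∈ R.simples, c α • coroot α) :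
    ∑ γ ∈ R.pos, copair θ γ = 2 * ∑ α ∈ R.simples, c α := by
  calc ∑ γ ∈ R.pos, copair θ γ
      = ∑ γ ∈ R.pos, ∑ α ∈ R.simples, c α * copair α γ := by
        simp only [copair_eq_inner_coroot, hc, inner_sum, real_inner_smul_right]
    _ = ∑ α ∈ R.simples, c α * ∑ γ ∈ R.pos, copair α γ := by
        rw [Finset.sum_comm]
        simp only [Finset.mul_sum]
    _ = 2 * ∑ α ∈ R.simples, c α := by
        rw [Finset.mul_sum]
        exact Finset.sum_congr rfl fun α hα => by rw [sum_copair_pos_of_mem_simples hα, mul_comm]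

variable (R) in
def IsHighestRoot (θ : V) : Prop := θ ∈ R.pos ∧ ∀ γ ∈ R.pos, θ - γ ∈ R.posCone

namespace IsHighestRoot

variable {θ : V}

theorem mem_roots (hθ : R.IsHighestRoot θ) : θ ∈ R.roots :=
  R.pos_subset hθ.1

theorem ne_zero (hθ : R.IsHighestRoot θ) : θ ≠ 0 :=
  R.ne_zero_of_mem_roots hθ.mem_roots

/-- Otherwise `s_γ θ = θ + mγ` with `m > 0` would be a positive root strictly above `θ`. -/
theorem copair_nonneg (hθ : R.IsHighestRoot θ) {γ : V} (hγ : γ ∈ R.pos) : 0 ≤ copair θ γ := by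
  have hγr : γ ∈ R.roots := R.pos_subset hγ
  have hγ0 : γ ≠ 0 := R.ne_zero_of_mem_roots hγr
  by_contra hneg
  rw [not_le, copair_neg_iff hθ.ne_zero, real_inner_comm, ← copair_neg_iff hγ0] at hneg
  obtain ⟨n, hn⟩ := R.crystallographic θ hθ.mem_roots γ hγr
  change copair γ θ = n at hn
  obtain ⟨m, rfl⟩ := Int.exists_eq_neg_ofNat (a := n) (by exact_mod_cast hn ▸ hneg.le)
  have hm : m ≠ 0 := by rintro rfl; simp [hn] at hneg
  have hrefl : reflAt γ θ = θ + (m : ℝ) • γ := by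
    rw [reflAt_apply, hn, Int.cast_neg, Int.cast_natCast, neg_smul, sub_neg_eq_add]
  have hmγ : (m : ℝ) • γ ∈ R.posCone :=
    Nat.cast_smul_eq_nsmul ℝ m γ ▸ nsmul_mem (R.mem_posCone_of_mem_pos hγ) m
  have hpos : reflAt γ θ ∈ R.pos := by
    rw [R.mem_pos_iff_mem_posCone (R.reflAt_mem_roots hγr hθ.mem_roots), hrefl]
    exact add_mem (R.mem_posCone_of_mem_pos hθ.1) hmγ
  have hbelow := hθ.2 _ hpos
  rw [hrefl, sub_add_cancel_left] at hbelow
  exact smul_ne_zero (Nat.cast_ne_zero.mpr hm) hγ0 (R.eq_zero_of_mem_posCone_of_neg_mem hmγ hbelow)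

theorem mem_pos_of_copair_pos (hθ : R.IsHighestRoot θ) {γ : V} (hγ : γ ∈ R.roots)
    (h : 0 < copair θ γ) : γ ∈ R.pos :=
  (R.pos_or_neg γ hγ).resolve_right fun hneg => by
    linarith [copair_neg θ γ ▸ hθ.copair_nonneg hneg]

theorem copair_nonneg_of_mem_posCone (hθ : R.IsHighestRoot θ) {x : V} (hx : x ∈ R.posCone) :
    0 ≤ copair θ x := by
  induction hx using AddSubmonoid.closure_induction with
  | mem α hα => exact hθ.copair_nonneg (R.simples_subset hα)
  | zero => simp [copair_eq_inner_coroot]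
  | add x y _ _ hx hy => rw [copair_add]; positivity

theorem copair_le_two (hθ : R.IsHighestRoot θ) {γ : V} (hγ : γ ∈ R.pos) : copair θ γ ≤ 2 := by
  have h := hθ.copair_nonneg_of_mem_posCone (hθ.2 γ hγ)
  rw [copair_sub, copair_self hθ.ne_zero] at h
  linarith

/-- `-s_θ γ = 2θ - γ` is then a positive root, which puts both `θ - γ` and `γ - θ` in
`posCone`. -/
theorem eq_of_copair_eq_two (hθ : R.IsHighestRoot θ) {γ : V} (hγ : γ ∈ R.pos)
    (h2 : copair θ γ = 2) : γ = θ := by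
  have hμ : -reflAt θ γ ∈ R.roots :=
    R.neg_mem _ (R.reflAt_mem_roots hθ.mem_roots (R.pos_subset hγ))
  have hμpos : -reflAt θ γ ∈ R.pos := hθ.mem_pos_of_copair_pos hμ (by
    rw [copair_neg, copair_reflAt hθ.ne_zero, h2]
    norm_num)
  have hbelow := hθ.2 _ hμpos
  rw [show θ - -reflAt θ γ = -(θ - γ) by rw [reflAt_apply, h2]; module] at hbelow
  exact (sub_eq_zero.mp (R.eq_zero_of_mem_posCone_of_neg_mem (hθ.2 γ hγ) hbelow)).symm

theorem copair_eq_zero_or_one (hθ : R.IsHighestRoot θ) {γ : V} (hγ : γ ∈ R.pos)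
    (hne : γ ≠ θ) : copair θ γ = 0 ∨ copair θ γ = 1 := by
  obtain ⟨n, hn⟩ := R.crystallographic γ (R.pos_subset hγ) θ hθ.mem_roots
  change copair θ γ = n at hn
  have h0 : 0 ≤ n := by exact_mod_cast hn ▸ hθ.copair_nonneg hγ
  have h2 : n ≤ 2 := by exact_mod_cast hn ▸ hθ.copair_le_two hγ
  have hne2 : n ≠ 2 := fun h => hne (hθ.eq_of_copair_eq_two hγ (by rw [hn, h]; norm_num))
  obtain rfl | rfl : n = 0 ∨ n = 1 := by omega
  all_goals simp [hn]

theorem sum_copair_pos_eq_card_add_two (hθ : R.IsHighestRoot θ) :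
    ∑ γ ∈ R.pos, copair θ γ = ({γ ∈ R.pos | copair θ γ = 1} : Finset V).card + 2 := by
  classical
  have hsplit : ∀ γ ∈ R.pos,
      copair θ γ = (if copair θ γ = 1 then 1 else 0) + (if γ = θ then 2 else 0) := by
    intro γ hγ
    by_cases hγθ : γ = θ
    · subst hγθ
      simp [copair_self hθ.ne_zero]
    · rcases hθ.copair_eq_zero_or_one hγ hγθ with h | h <;> simp [h, hγθ]
  rw [Finset.sum_congr rfl hsplit, Finset.sum_add_distrib, Finset.sum_boole,
    Finset.sum_ite_eq', if_pos hθ.1]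

theorem levelOne_eq_filter (hθ : R.IsHighestRoot θ) :
    levelOne R θ = ↑({γ ∈ R.pos | copair θ γ = 1} : Finset V) := by
  ext γ
  simp only [levelOne, Finset.coe_filter]
  exact ⟨fun ⟨hγ, h1⟩ => ⟨hθ.mem_pos_of_copair_pos hγ (h1 ▸ one_pos), h1⟩,
    fun ⟨hγ, h1⟩ => ⟨R.pos_subset hγ, h1⟩⟩

end IsHighestRoot

end RootSystemData

theorem card_levelOne_eq_general (R : RootSystemData V)
    (θ : V) (hθ : θ ∈ R.pos)
    (hhigh : ∀ γ ∈ R.pos, ∃ c : V → ℕ, θ = γ + ∑ α ∈ R.simples, (c α : ℝ) • α)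
    (hstar : ℕ) (c : V → ℕ)
    (hc : (2 / (inner ℝ θ θ : ℝ)) • θ
        = ∑ α ∈ R.simples, (c α : ℝ) • ((2 / (inner ℝ α α : ℝ)) • α))
    (hsum : ∑ α ∈ R.simples, c α = hstar - 1) :
    (levelOne R θ).ncard = 2 * hstar - 4 := by
  have hθhigh : R.IsHighestRoot θ := ⟨hθ, fun γ hγ => by
    obtain ⟨k, hk⟩ := hhigh γ hγ
    exact R.mem_posCone_iff.mpr ⟨k, by rw [hk, add_sub_cancel_left]⟩⟩
  have hcount : (({γ ∈ R.pos | copair θ γ = 1} : Finset V).card : ℝ) + 2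
      = 2 * ((hstar - 1 : ℕ) : ℝ) := by
    rw [← hθhigh.sum_copair_pos_eq_card_add_two,
      R.sum_copair_pos_eq_of_coroot_eq (c := fun α => (c α : ℝ)) hc, ← hsum, Nat.cast_sum]
  rw [hθhigh.levelOne_eq_filter, Set.ncard_coe_finset]
  have hcard : ({γ ∈ R.pos | copair θ γ = 1} : Finset V).card + 2 = 2 * (hstar - 1) := by
    exact_mod_cast hcount
  omega

/-- Let `Δ` be an irreducible root system with highest root `θ` and dual Coxeter number
`h*` (so that `h* − 1` is the height of `θ∨` in the dual root system). Then the number of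
roots `γ` with `(γ, θ∨) = 1` equals `2h* − 4`. -/
theorem card_levelOne_eq (R : RootSystemData V) (hirr : R.Irreducible)
    (θ : V) (hθ : θ ∈ R.pos)
    (hhigh : ∀ γ ∈ R.pos, ∃ c : V → ℕ, θ = γ + ∑ α ∈ R.simples, (c α : ℝ) • α)
    (hstar : ℕ) (hstar2 : 2 ≤ hstar) (c : V → ℕ)
    (hc : (2 / (inner ℝ θ θ : ℝ)) • θ
        = ∑ α ∈ R.simples, (c α : ℝ) • ((2 / (inner ℝ α α : ℝ)) • α))
    (hsum : ∑ α ∈ R.simples, c α = hstar - 1) :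
    (levelOne R θ).ncard = 2 * hstar - 4 :=
  card_levelOne_eq_general R θ hθ hhigh hstar c hc hsum
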